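/- Let G be a group, n ≥ 3, E the set of idempotents of End F_n(G), and IG(E) the free idempotent generated monoid over E. Let a, b : {1,…,n} → G with a(1) = b(1) = 1 and let j, j' ∈ {1,…,n}. If a(j) = b(j') (equivalently, e_{1j} e_{a,1} = e_{1j'} e_{b,1} in End F_n(G)), then ē_{11} ē_{a,j} ē_{11} = ē_{11} ē_{b,j'} ē_{11} in IG(E). -/

import Mathlib

/-- An endomorphism of the rank-`n` free left `G`-act `F_n(G) = G × Fin n`
(the formal symbols `g x_i` are the pairs `(g, i)`), where the action is
`h • (g, i) = (h * g, i)` and equivariance says `(h • x) a = h • (x a)`. -/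
structure ActEnd (G : Type*) [Group G] (n : ℕ) : Type _ where
  toFun : G × Fin n → G × Fin n
  equivariant : ∀ (h : G) (x : G × Fin n),
    toFun (h * x.1, x.2) = (h * (toFun x).1, (toFun x).2)

namespace ActEnd

variable {G : Type*} [Group G] {n : ℕ}

/-- Composition is written left-to-right: `x (a * b) = (x a) b`. -/
instance : Monoid (ActEnd G n) where
  mul a b := ⟨fun x => b.toFun (a.toFun x), by
    intro h x
    try dsimp only
    rw [a.equivariant h x, b.equivariant]⟩
  one := ⟨id, fun _ _ => rfl⟩
  mul_assoc _ _ _ := rfl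
  one_mul _ := rfl
  mul_one _ := rfl

@[simp] theorem mul_toFun (a b : ActEnd G n) (x : G × Fin n) :
    (a * b).toFun x = b.toFun (a.toFun x) := rfl

theorem ext' {a b : ActEnd G n} (h : a.toFun = b.toFun) : a = b := by
  cases a; cases b; cases h; rfl

/-- The rank of an endomorphism of `F_n(G)`: the number of indices `j` such
that `G x_j` meets the image. -/
noncomputable def rank (a : ActEnd G n) : ℕ :=
  Nat.card {j : Fin n // ∃ x, (a.toFun x).2 = j}

end ActEnd

namespace ActEnd

variable {G : Type*} [Group G] {n : ℕ}

/-- The rank-1 idempotent `e_{a,j}` given by `(g x_t) e_{a,j} = (g * a t * (a j)⁻¹) x_j`.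
Taking `a` constantly `1` gives `e_{1j}`, and also `j = 0` gives `e_{11}`
(indices `1, …, n` are realised as `Fin n`, with `1 ↦ 0`). -/
def eaj (a : Fin n → G) (j : Fin n) : ActEnd G n :=
  ⟨fun x => (x.1 * a x.2 * (a j)⁻¹, j), by intro h x; simp [mul_assoc]⟩

theorem eaj_idem (a : Fin n → G) (j : Fin n) : eaj a j * eaj a j = eaj a j := by
  apply ext'
  funext x
  simp [eaj, mul_assoc]

/-- The map `a_g : g' x_t ↦ (g' * g) x_1`. -/
def aMap (g : G) (h0 : 0 < n) : ActEnd G n :=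
  ⟨fun x => (x.1 * g, ⟨0, h0⟩), by intro h x; simp [mul_assoc]⟩

end ActEnd

/-- The principal left ideal `M a` of `a`. -/
def lIdeal {M : Type*} [Monoid M] (a : M) : Set M := Set.range fun m => m * a

/-- The principal right ideal `a M` of `a`. -/
def rIdeal {M : Type*} [Monoid M] (a : M) : Set M := Set.range fun m => a * m

/-- The `H`-class of `e`: all elements that are both `L`- and `R`-related to `e`. -/
def hClass {M : Type*} [Monoid M] (e : M) : Set M :=
  {a | lIdeal a = lIdeal e ∧ rIdeal a = rIdeal e}

/-- The defining relation of the free idempotent generated monoid `IG(E)`: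
`ē f̄ = (e f)‾` whenever `{e, f} ∩ {e f, f e} ≠ ∅`. -/
def igRel (M : Type*) [Monoid M] :
    FreeMonoid {e : M // e * e = e} → FreeMonoid {e : M // e * e = e} → Prop :=
  fun x y => ∃ e f g : {e : M // e * e = e},
    (e.1 * f.1 = e.1 ∨ e.1 * f.1 = f.1 ∨ f.1 * e.1 = e.1 ∨ f.1 * e.1 = f.1) ∧
    e.1 * f.1 = g.1 ∧
    x = FreeMonoid.of e * FreeMonoid.of f ∧ y = FreeMonoid.of g

/-- The free idempotent generated monoid over the biordered set of idempotents
of `M`: the presented monoid with generators `ē` for each idempotent `e` and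
relations `ē f̄ = (e f)‾` whenever `{e, f} ∩ {e f, f e} ≠ ∅`. -/
abbrev IG (M : Type*) [Monoid M] : Type _ := (conGen (igRel M)).Quotient

/-- The generator `ē` of `IG(E)` corresponding to the idempotent `e`. -/
def ebar {M : Type*} [Monoid M] (e : {e : M // e * e = e}) : IG M :=
  (conGen (igRel M)).mk' (FreeMonoid.of e)

/-- `ē_{a,j}` as an element of `IG(E)` for `E` the idempotents of `End F_n(G)`. -/
def igE {G : Type*} [Group G] {n : ℕ} (a : Fin n → G) (j : Fin n) : IG (ActEnd G n) :=
  ebar ⟨ActEnd.eaj a j, ActEnd.eaj_idem a j⟩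

/-- `ē_{11}` as an element of `IG(E)`. -/
def ig11 {G : Type*} [Group G] {n : ℕ} (h0 : 0 < n) : IG (ActEnd G n) :=
  igE (fun _ => (1 : G)) ⟨0, h0⟩

/-!
Let `U` be the idempotent `g x_t ↦ g x_{U t}` with `U 1 = 1` and `U t = j` otherwise. It is a right
identity of both `e_{11}` and `e_{a,j}`, so in `IG(E)` we get `ē_{11} ē_{a,j} = ē_{11} ū ē_{a,j}
= ē_{11} ē_{c,j}` with `e_{c,j} = U e_{a,j}`, where `c = a ∘ U` only remembers `a 1 = 1` and
`a j`. Dually, the idempotent `V` sending `x_j ↦ x_{j'}` is a left identity of `e_{11}` and of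
`e_{c,j}`, and `e_{c,j} V = e_{c,j'}`, so `ē_{c,j} ē_{11} = ē_{c,j'} ē_{11}`. Applying the first
step to `b` and `j'` yields the same `c`, since `a j = b j'`.
-/

section FreeIdempotentGenerated

variable {M : Type*} [Monoid M] {e f g u : {e : M // e * e = e}}

theorem ebar_mul_ebar
    (hbasic : e.1 * f.1 = e.1 ∨ e.1 * f.1 = f.1 ∨ f.1 * e.1 = e.1 ∨ f.1 * e.1 = f.1)
    (hg : e.1 * f.1 = g.1) : ebar e * ebar f = ebar g :=
  (map_mul (conGen (igRel M)).mk' _ _).symm.trans <|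
    (Con.eq _).mpr (ConGen.Rel.of _ _ ⟨e, f, g, hbasic, hg, rfl, rfl⟩)

theorem ebar_mul_ebar_eq_of_right_absorb (heu : e.1 * u.1 = e.1) (hfu : f.1 * u.1 = f.1)
    (hg : u.1 * f.1 = g.1) : ebar e * ebar f = ebar e * ebar g := by
  rw [← ebar_mul_ebar (.inr (.inr (.inr hfu))) hg, ← mul_assoc, ebar_mul_ebar (.inl heu) heu]

theorem ebar_mul_ebar_eq_of_left_absorb (hue : u.1 * e.1 = e.1) (huf : u.1 * f.1 = f.1)
    (hg : f.1 * u.1 = g.1) : ebar f * ebar e = ebar g * ebar e := by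
  rw [← ebar_mul_ebar (.inr (.inr (.inl huf))) hg, mul_assoc, ebar_mul_ebar (.inr (.inl hue)) hue]

end FreeIdempotentGenerated

namespace ActEnd

variable {G : Type*} [Group G] {n : ℕ}

def reindex (σ : Fin n → Fin n) : ActEnd G n :=
  ⟨fun x => (x.1, σ x.2), fun _ _ => rfl⟩

theorem reindex_mul_reindex (σ τ : Fin n → Fin n) :
    reindex (G := G) σ * reindex τ = reindex (τ ∘ σ) :=
  rfl

theorem reindex_idem {σ : Fin n → Fin n} (hσ : σ ∘ σ = σ) :
    reindex (G := G) σ * reindex σ = reindex σ := by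
  rw [reindex_mul_reindex, hσ]

theorem eaj_mul_reindex {a : Fin n → G} {j : Fin n} {σ : Fin n → Fin n} (h : a (σ j) = a j) :
    eaj a j * reindex σ = eaj a (σ j) := by
  apply ext'; funext x
  simp [eaj, reindex, h]

theorem reindex_mul_eaj {a : Fin n → G} {j : Fin n} {σ : Fin n → Fin n} (h : a (σ j) = a j) :
    reindex σ * eaj a j = eaj (a ∘ σ) j := by
  apply ext'; funext x
  simp [eaj, reindex, h]

end ActEnd

section Collapse

variable {α : Type*} [DecidableEq α]

def collapse (i j : α) : α → α :=
  Function.update (fun _ => j) i i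

theorem collapse_apply_right (i j : α) : collapse i j j = j := by
  by_cases h : j = i <;> simp [collapse, h]

theorem collapse_comp_self (i j : α) : collapse i j ∘ collapse i j = collapse i j := by
  funext t
  by_cases ht : t = i
  · simp [collapse, ht]
  · simp only [Function.comp_apply, collapse, Function.update_of_ne ht]
    exact collapse_apply_right i j

theorem comp_collapse {β : Type*} (f : α → β) (i j : α) :
    f ∘ collapse i j = Function.update (fun _ => f j) i (f i) := by
  rw [collapse, Function.comp_update]
  rfl

theorem update_id_comp_self (j j' : α) :
    Function.update id j j' ∘ Function.update id j j' = Function.update id j j' := by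
  funext t
  by_cases ht : t = j <;> by_cases hj : j' = j <;> simp [ht, hj]

end Collapse

section IdempotentsOfActEnd

variable {G : Type*} [Group G] {n : ℕ}

open ActEnd

theorem igE_const_mul_igE (i j : Fin n) (a : Fin n → G) :
    igE (fun _ => 1) i * igE a j = igE (fun _ => 1) i * igE (a ∘ collapse i j) j := by
  have hi : collapse i j i = i := by simp [collapse]
  have hj := collapse_apply_right i j
  have h11 : eaj (fun _ => (1 : G)) i * reindex (collapse i j) = eaj (fun _ => 1) i := by
    rw [eaj_mul_reindex rfl, hi]
  have ha : eaj a j * reindex (collapse i j) = eaj a j := by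
    rw [eaj_mul_reindex (by rw [hj]), hj]
  exact ebar_mul_ebar_eq_of_right_absorb
    (u := ⟨reindex (collapse i j), reindex_idem (collapse_comp_self i j)⟩) h11 ha
    (reindex_mul_eaj (by rw [hj]))

theorem igE_mul_igE_const (i : Fin n) {c : Fin n → G} {j j' : Fin n} (hc : c j = c j') :
    igE c j * igE (fun _ => 1) i = igE c j' * igE (fun _ => 1) i := by
  have hV : c ∘ Function.update id j j' = c := by
    funext t
    by_cases ht : t = j <;> simp [ht, hc]
  have h11 : reindex (Function.update id j j') * eaj (fun _ => (1 : G)) i =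
      eaj (fun _ => 1) i :=
    reindex_mul_eaj rfl
  have hcj : reindex (Function.update id j j') * eaj c j = eaj c j := by
    rw [reindex_mul_eaj (by simp [hc]), hV]
  have hcj' : eaj c j * reindex (Function.update id j j') = eaj c j' := by
    rw [eaj_mul_reindex (by simp [hc])]
    simp
  exact ebar_mul_ebar_eq_of_left_absorb
    (u := ⟨reindex (Function.update id j j'), reindex_idem (update_id_comp_self j j')⟩)
    h11 hcj hcj'

end IdempotentsOfActEnd

/-- If `a j = b j'` (equivalently `e_{1j} e_{a,1} = e_{1j'} e_{b,1}`), then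
`ē_{11} ē_{a,j} ē_{11} = ē_{11} ē_{b,j'} ē_{11}` in `IG(E)`. -/
theorem stmt16 {G : Type*} [Group G] {n : ℕ} (hn : 3 ≤ n)
    (a b : Fin n → G) (ha : a ⟨0, by omega⟩ = 1) (hb : b ⟨0, by omega⟩ = 1)
    (j j' : Fin n) (hab : a j = b j') :
    ig11 (G := G) (n := n) (by omega) * igE a j * ig11 (G := G) (n := n) (by omega) =
      ig11 (G := G) (n := n) (by omega) * igE b j' * ig11 (G := G) (n := n) (by omega) := by
  set z : Fin n := ⟨0, by omega⟩
  have hc : a ∘ collapse z j = b ∘ collapse z j' := by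
    rw [comp_collapse, comp_collapse, ha, hb, hab]
  have hcj : (a ∘ collapse z j) j = (a ∘ collapse z j) j' := by
    rw [Function.comp_apply, collapse_apply_right, hc, Function.comp_apply,
      collapse_apply_right, hab]
  simp only [ig11]
  calc igE (fun _ => 1) z * igE a j * igE (fun _ => 1) z
      = igE (fun _ => 1) z * igE (a ∘ collapse z j) j * igE (fun _ => 1) z := by
        rw [igE_const_mul_igE]
    _ = igE (fun _ => 1) z * igE (a ∘ collapse z j) j' * igE (fun _ => 1) z := by
        rw [mul_assoc, igE_mul_igE_const z hcj, ← mul_assoc]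
    _ = igE (fun _ => 1) z * igE b j' * igE (fun _ => 1) z := by
        rw [hc, ← igE_const_mul_igE]
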